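/- arXiv:math/0611544 — 2 statements merged into one kernel-verified Lean document; each statement's English description precedes it below -/
import Mathlib

section
/- Let S be a measurable space, K : S × S → ℝ a bounded symmetric measurable kernel, and F, G probability measures on S. Then the quadratic distance admits the U-functional representation d_K(F,G) = ∬ K_{cen(G)}(x,y) dF(x) dF(y). -/
open MeasureTheory

/-- The quadratic distance d_K(F,G) = ∬ K(s,t) d(F−G)(s) d(F−G)(t), written as the
iterated integral of s ↦ ∫ K(s,t) d(F−G)(t) against the signed measure F−G. -/
noncomputable def quadDist {S : Type*} [MeasurableSpace S] (K : S → S → ℝ)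
    (F G : Measure S) : ℝ :=
  (∫ s, (∫ t, K s t ∂F - ∫ t, K s t ∂G) ∂F) - ∫ s, (∫ t, K s t ∂F - ∫ t, K s t ∂G) ∂G

/-- The G-centered kernel
K_{cen(G)}(x,y) = K(x,y) − K(x,G) − K(G,y) + K(G,G). -/
noncomputable def kcen {S : Type*} [MeasurableSpace S] (K : S → S → ℝ) (G : Measure S)
    (x y : S) : ℝ :=
  K x y - ∫ t, K x t ∂G - ∫ s, K s y ∂G + ∫ s, ∫ t, K s t ∂G ∂G

/-- the quadratic distance admits the U-functional representation
d_K(F,G) = ∬ K_{cen(G)}(x,y) dF(x) dF(y). -/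
theorem quadDist_eq_integral_kcen {S : Type*} [MeasurableSpace S] (K : S → S → ℝ)
    (hKmeas : Measurable (Function.uncurry K))
    (hKbdd : ∃ C : ℝ, ∀ x y, |K x y| ≤ C)
    (hKsymm : ∀ x y, K x y = K y x)
    (F G : Measure S) [IsProbabilityMeasure F] [IsProbabilityMeasure G] :
    quadDist K F G = ∫ x, ∫ y, kcen K G x y ∂F ∂F := by
  obtain ⟨C, hC⟩ := hKbdd
  have hC' : ∀ x y, ‖K x y‖ ≤ C := by simpa [Real.norm_eq_abs] using hC
  have hmx : ∀ x : S, Measurable (K x) := fun x =>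
    hKmeas.comp (measurable_const.prodMk measurable_id)
  have hint : ∀ (x : S) (μ : Measure S) [IsProbabilityMeasure μ], Integrable (K x) μ := by
    intro x μ _
    exact (integrable_const C).mono' (hmx x).aestronglyMeasurable
      (Filter.Eventually.of_forall fun y => hC' x y)
  have hg_sm : StronglyMeasurable (fun x => ∫ t, K x t ∂G) :=
    (hKmeas.stronglyMeasurable).integral_prod_right'
  have hbd : ∀ (x : S) (μ : Measure S) [IsProbabilityMeasure μ], ‖∫ t, K x t ∂μ‖ ≤ C := by
    intro x μ _
    calc ‖∫ t, K x t ∂μ‖ ≤ C * (μ Set.univ).toReal :=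
          norm_integral_le_of_norm_le_const (Filter.Eventually.of_forall fun t => hC' x t)
      _ = C := by simp
  have hg_int : ∀ (μ : Measure S) [IsProbabilityMeasure μ],
      Integrable (fun x => ∫ t, K x t ∂G) μ := fun μ _ =>
    (integrable_const C).mono' hg_sm.aestronglyMeasurable
      (Filter.Eventually.of_forall fun x => hbd x G)
  have hf_sm : StronglyMeasurable (fun x => ∫ t, K x t ∂F) :=
    (hKmeas.stronglyMeasurable).integral_prod_right'
  have hf_int : ∀ (μ : Measure S) [IsProbabilityMeasure μ],
      Integrable (fun x => ∫ t, K x t ∂F) μ := fun μ _ =>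
    (integrable_const C).mono' hf_sm.aestronglyMeasurable
      (Filter.Eventually.of_forall fun x => hbd x F)
  set f : S → ℝ := fun x => ∫ t, K x t ∂F with hf
  set g : S → ℝ := fun x => ∫ t, K x t ∂G with hg
  set c : ℝ := ∫ s, ∫ t, K s t ∂G ∂G with hc
  -- Fubini: ∫ f dG = ∫ g dF
  have hprod : Integrable (Function.uncurry K) (G.prod F) :=
    (integrable_const C).mono' hKmeas.aestronglyMeasurable
      (Filter.Eventually.of_forall fun p => hC' p.1 p.2)
  have hswap : ∫ x, f x ∂G = ∫ t, g t ∂F := by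
    have := integral_integral_swap (f := fun x t => K x t) hprod
    rw [hf, hg]
    simp_rw [this, hKsymm]
  -- inner integral of kcen
  have hinner : ∀ x : S, ∫ y, kcen K G x y ∂F = f x - g x - (∫ y, g y ∂F) + c := by
    intro x
    have h1 : ∀ y : S, kcen K G x y = K x y - g x - g y + c := by
      intro y
      simp only [kcen, hg, hc]
      rw [show (∫ s, K s y ∂G) = ∫ t, K y t ∂G by simp_rw [hKsymm]]
    simp_rw [h1]
    have i1 : Integrable (fun y => K x y - g x) F := (hint x F).sub (integrable_const _)
    have i2 : Integrable (fun y => K x y - g x - g y) F := i1.sub (hg_int F)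
    rw [integral_add i2 (integrable_const c), integral_sub i1 (hg_int F),
      integral_sub (hint x F) (integrable_const _)]
    simp [hf]
  -- outer integral
  have houter : ∫ x, ∫ y, kcen K G x y ∂F ∂F
      = (∫ x, f x ∂F) - (∫ x, g x ∂F) - (∫ y, g y ∂F) + c := by
    simp_rw [hinner]
    have j1 : Integrable (fun x => f x - g x) F := (hf_int F).sub (hg_int F)
    have j2 : Integrable (fun x => f x - g x - ∫ y, g y ∂F) F := j1.sub (integrable_const _)
    rw [integral_add j2 (integrable_const c), integral_sub j1 (integrable_const _),
      integral_sub (hf_int F) (hg_int F)]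
    simp
  rw [houter]
  have hL1 : ∫ s, (f s - g s) ∂F = (∫ x, f x ∂F) - ∫ x, g x ∂F :=
    integral_sub (hf_int F) (hg_int F)
  have hL2 : ∫ s, (f s - g s) ∂G = (∫ x, f x ∂G) - ∫ x, g x ∂G :=
    integral_sub (hf_int G) (hg_int G)
  have hgc : ∫ x, g x ∂G = c := rfl
  simp only [quadDist]
  rw [show (∫ s, (∫ t, K s t ∂F - ∫ t, K s t ∂G) ∂F) = ∫ s, (f s - g s) ∂F from rfl,
    show (∫ s, (∫ t, K s t ∂F - ∫ t, K s t ∂G) ∂G) = ∫ s, (f s - g s) ∂G from rfl,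
    hL1, hL2, hgc, hswap]
  ring
end

section
/- Let K : S × S → ℝ be a bounded symmetric measurable kernel, G a probability measure on S, and X_1,…,X_n independent random variables each distributed according to a probability measure F on S. Then the V-statistic V_n = (1/n²) Σ_{i=1}^n Σ_{j=1}^n K_{cen(G)}(X_i, X_j) is a biased estimator of the quadratic distance, with E[V_n] = ((n−1)/n) d_K(F,G) + (1/n) ∫ K_{cen(G)}(x,x) dF(x). -/
open MeasureTheory ProbabilityTheory

section Bounded

variable {α : Type*} [MeasurableSpace α] {μ : Measure α} {f : α → ℝ} {C : ℝ}

lemma abs_integral_le_of_forall_abs_le [IsProbabilityMeasure μ] (h : ∀ x, |f x| ≤ C) :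
    |∫ x, f x ∂μ| ≤ C := by
  simpa using norm_integral_le_of_norm_le_const (μ := μ)
    (ae_of_all _ fun x => (Real.norm_eq_abs _).trans_le (h x))

lemma integrable_of_forall_abs_le [IsFiniteMeasure μ] (hf : Measurable f)
    (h : ∀ x, |f x| ≤ C) : Integrable f μ :=
  .of_bound hf.aestronglyMeasurable C (ae_of_all _ fun x => (Real.norm_eq_abs _).trans_le (h x))

end Bounded

section CenteredKernel

variable {S : Type*} [MeasurableSpace S] {K : S → S → ℝ} {C : ℝ} {F G : Measure S}

lemma measurable_uncurry_kcen [SFinite G] (hK : Measurable (Function.uncurry K)) :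
    Measurable (Function.uncurry (kcen K G)) := by
  have hright : Measurable fun x => ∫ t, K x t ∂G :=
    (hK.stronglyMeasurable.integral_prod_right (ν := G)).measurable
  have hleft : Measurable fun y => ∫ s, K s y ∂G :=
    (hK.stronglyMeasurable.integral_prod_left (μ := G)).measurable
  have hK' : Measurable fun p : S × S => K p.1 p.2 := hK
  exact ((hK'.sub (hright.comp measurable_fst)).sub (hleft.comp measurable_snd)).add
    measurable_const

lemma abs_kcen_le [IsProbabilityMeasure G] (hC : ∀ x y, |K x y| ≤ C) (x y : S) :
    |kcen K G x y| ≤ 4 * C := by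
  have h₁ := abs_le.mp (hC x y)
  have h₂ := abs_le.mp (abs_integral_le_of_forall_abs_le (μ := G) (hC x))
  have h₃ := abs_le.mp (abs_integral_le_of_forall_abs_le (μ := G) (hC · y))
  have h₄ := abs_le.mp (abs_integral_le_of_forall_abs_le (μ := G) fun s =>
    abs_integral_le_of_forall_abs_le (μ := G) (hC s))
  rw [kcen, abs_le]
  constructor <;> linarith

lemma integral_kcen_prod [IsProbabilityMeasure F] [IsProbabilityMeasure G]
    (hK : Measurable (Function.uncurry K)) (hC : ∀ x y, |K x y| ≤ C) :
    ∫ p, kcen K G p.1 p.2 ∂(F.prod F) = quadDist K F G := by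
  have hKint : ∀ (μ : Measure (S × S)) [IsFiniteMeasure μ], Integrable (Function.uncurry K) μ :=
    fun μ _ => integrable_of_forall_abs_le hK fun p => hC p.1 p.2
  set a : S → ℝ := fun x => ∫ t, K x t ∂F
  set b : S → ℝ := fun x => ∫ t, K x t ∂G
  set b' : S → ℝ := fun y => ∫ s, K s y ∂G
  have ha : ∀ (μ : Measure S) [IsFiniteMeasure μ], Integrable a μ :=
    fun μ _ => (hKint (μ.prod F)).integral_prod_left
  have hb : ∀ (μ : Measure S) [IsFiniteMeasure μ], Integrable b μ :=
    fun μ _ => (hKint (μ.prod G)).integral_prod_left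
  have hb' : Integrable b' F := (hKint (G.prod F)).integral_prod_right
  have hb₁ := (hb F).comp_fst F
  have hb'₂ := hb'.comp_snd F
  have hK₂ := hKint (F.prod F)
  have hKb : Integrable (fun p => Function.uncurry K p - b p.1) (F.prod F) := hK₂.sub hb₁
  have hKbb' : Integrable (fun p => Function.uncurry K p - b p.1 - b' p.2) (F.prod F) :=
    hKb.sub hb'₂
  calc ∫ p, kcen K G p.1 p.2 ∂(F.prod F)
      = ∫ p, (Function.uncurry K p - b p.1 - b' p.2 + ∫ x, b x ∂G) ∂(F.prod F) := rfl
    _ = ∫ p, Function.uncurry K p ∂(F.prod F) - ∫ x, b x ∂F - ∫ y, b' y ∂F + ∫ x, b x ∂G := by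
      rw [integral_add hKbb' (integrable_const _), integral_sub hKb hb'₂,
        integral_sub hK₂ hb₁, integral_fun_fst, integral_fun_snd]
      simp
    _ = ∫ x, a x ∂F - ∫ x, b x ∂F - ∫ x, a x ∂G + ∫ x, b x ∂G := by
      rw [integral_prod _ hK₂, integral_integral_swap (hKint (G.prod F))]
      rfl
    _ = quadDist K F G := by
      rw [quadDist, integral_sub (ha F) (hb F), integral_sub (ha G) (hb G)]
      ring

end CenteredKernel

section IID

variable {ι Ω S : Type*} [MeasurableSpace Ω] [MeasurableSpace S] {P : Measure Ω}
  {F : Measure S} {X : ι → Ω → S}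

lemma integrable_comp_and_integral_comp_of_map_eq {Z : Ω → S} (hZ : AEMeasurable Z P)
    (hlaw : P.map Z = F) {g : S → ℝ} (hg : Integrable g F) :
    Integrable (fun ω => g (Z ω)) P ∧ ∫ ω, g (Z ω) ∂P = ∫ x, g x ∂F := by
  subst hlaw
  exact ⟨hg.comp_aemeasurable hZ, (integral_map hZ hg.aestronglyMeasurable).symm⟩

lemma map_pair_eq_prod_of_iIndepFun [SigmaFinite F] (hXmeas : ∀ i, AEMeasurable (X i) P)
    (hXindep : iIndepFun X P) (hXdist : ∀ i, P.map (X i) = F) {i j : ι} (hij : i ≠ j) :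
    P.map (fun ω => (X i ω, X j ω)) = F.prod F := by
  have hσ : ∀ k, SigmaFinite (P.map (X k)) := fun k => hXdist k ▸ inferInstance
  rw [(indepFun_iff_map_prod_eq_prod_map_map' (hXmeas i) (hXmeas j) (hσ i) (hσ j)).mp
    (hXindep.indepFun hij), hXdist i, hXdist j]

lemma integrable_comp_and_integral_comp_pair_of_iIndepFun [DecidableEq ι] [SigmaFinite F]
    (hXmeas : ∀ i, AEMeasurable (X i) P) (hXindep : iIndepFun X P)
    (hXdist : ∀ i, P.map (X i) = F) {f : S × S → ℝ} (hf : Integrable f (F.prod F))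
    (hf_diag : Integrable (fun x => f (x, x)) F) (i j : ι) :
    Integrable (fun ω => f (X i ω, X j ω)) P ∧
      ∫ ω, f (X i ω, X j ω) ∂P = if i = j then ∫ x, f (x, x) ∂F else ∫ p, f p ∂(F.prod F) := by
  split_ifs with hij
  · subst hij
    exact integrable_comp_and_integral_comp_of_map_eq (hXmeas i) (hXdist i) hf_diag
  · exact integrable_comp_and_integral_comp_of_map_eq ((hXmeas i).prodMk (hXmeas j))
      (map_pair_eq_prod_of_iIndepFun hXmeas hXindep hXdist hij) hf

end IID

lemma sum_sum_ite_eq_card_mul {ι R : Type*} [Fintype ι] [DecidableEq ι] [CommRing R] (a b : R) :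
    ∑ i : ι, ∑ j : ι, (if i = j then a else b) =
      Fintype.card ι * (a + (Fintype.card ι - 1) * b) := by
  have hrow : ∀ i : ι, ∑ j : ι, (if i = j then a else b) = a + (Fintype.card ι - 1) * b := by
    intro i
    have hsplit : ∀ j, (if i = j then a else b) = (if i = j then a - b else 0) + b := by
      intro j; split_ifs <;> ring
    simp only [hsplit, Finset.sum_add_distrib, Finset.sum_ite_eq, Finset.mem_univ, if_true,
      Finset.sum_const, Finset.card_univ, nsmul_eq_mul]
    ring
  simp only [hrow, Finset.sum_const, Finset.card_univ, nsmul_eq_mul]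

theorem vstatistic_biased_general {S Ω : Type*} [MeasurableSpace S] [MeasurableSpace Ω]
    (P : Measure Ω)
    (F G : Measure S) [IsProbabilityMeasure F] [IsProbabilityMeasure G]
    (K : S → S → ℝ)
    (hKmeas : Measurable (Function.uncurry K))
    (hKbdd : ∃ C : ℝ, ∀ x y, |K x y| ≤ C)
    (n : ℕ) (X : Fin n → Ω → S)
    (hXmeas : ∀ i, Measurable (X i))
    (hXindep : iIndepFun X P)
    (hXdist : ∀ i, Measure.map (X i) P = F) :
    ∫ ω, (1 / (n : ℝ) ^ 2) * ∑ i, ∑ j, kcen K G (X i ω) (X j ω) ∂P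
      = (((n : ℝ) - 1) / n) * quadDist K F G + (1 / (n : ℝ)) * ∫ x, kcen K G x x ∂F := by
  obtain ⟨C, hC⟩ := hKbdd
  have hk : Measurable (Function.uncurry (kcen K G)) := measurable_uncurry_kcen hKmeas
  have hk_int : ∀ (μ : Measure (S × S)) [IsFiniteMeasure μ],
      Integrable (Function.uncurry (kcen K G)) μ :=
    fun μ _ => integrable_of_forall_abs_le hk fun p => abs_kcen_le hC p.1 p.2
  have hterm := integrable_comp_and_integral_comp_pair_of_iIndepFun
    (f := fun p => kcen K G p.1 p.2) (fun i => (hXmeas i).aemeasurable) hXindep hXdist (hk_int _)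
    ((hk_int _).comp_measurable (measurable_id.prodMk measurable_id))
  rw [integral_const_mul, integral_finsetSum _ fun i _ =>
    integrable_finsetSum _ fun j _ => (hterm i j).1]
  simp only [integral_finsetSum _ fun j _ => (hterm _ j).1, fun i j => (hterm i j).2,
    integral_kcen_prod hKmeas hC, sum_sum_ite_eq_card_mul, Fintype.card_fin]
  -- for `n = 0` both sides are `0`, the right-hand side through `x / 0 = 0`
  rcases eq_or_ne (n : ℝ) 0 with hn | hn
  · simp [hn]
  · field_simp
    ring

/-- for X_1,…,X_n i.i.d. with law F, the V-statistic
V_n = (1/n²) Σ_i Σ_j K_{cen(G)}(X_i,X_j) has expectation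
E[V_n] = ((n−1)/n) d_K(F,G) + (1/n) ∫ K_{cen(G)}(x,x) dF(x). -/
theorem vstatistic_biased {S Ω : Type*} [MeasurableSpace S] [MeasurableSpace Ω]
    (P : Measure Ω) [IsProbabilityMeasure P]
    (F G : Measure S) [IsProbabilityMeasure F] [IsProbabilityMeasure G]
    (K : S → S → ℝ)
    (hKmeas : Measurable (Function.uncurry K))
    (hKbdd : ∃ C : ℝ, ∀ x y, |K x y| ≤ C)
    (hKsymm : ∀ x y, K x y = K y x)
    (n : ℕ) (hn : 1 ≤ n) (X : Fin n → Ω → S)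
    (hXmeas : ∀ i, Measurable (X i))
    (hXindep : iIndepFun X P)
    (hXdist : ∀ i, Measure.map (X i) P = F) :
    ∫ ω, (1 / (n : ℝ) ^ 2) * ∑ i, ∑ j, kcen K G (X i ω) (X j ω) ∂P
      = (((n : ℝ) - 1) / n) * quadDist K F G + (1 / (n : ℝ)) * ∫ x, kcen K G x x ∂F :=
  vstatistic_biased_general P F G K hKmeas hKbdd n X hXmeas hXindep hXdist
end
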